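/- arXiv:2604.02267 — 2 statements merged into one kernel-verified Lean document; each statement's English description precedes it below -/
import Mathlib

section
/- Let S=(1,s_2,s_3,...) be a packing sequence and define S' by s_i' = ⌊s_{i+1}/2⌋ for all i ≥ 1. For n ≥ 3, if the cycle C_{2n} is χ_S-critical, then C_n is χ_{S'}-critical. -/
open SimpleGraph

/-- `IsSPackingColoring G s φ` : `φ` is an `S`-packing coloring of `G` with colors
`Fin k`, where the value `s i` represents the entry `s_{i+1}` of the packing
sequence `S = (s_1, s_2, …)` (0-indexed encoding), and the color `j : Fin k`
represents color `j+1`: two distinct vertices sharing a color `i` (1-indexed)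
must be at distance greater than `s_i`. -/
def IsSPackingColoring {V : Type*} (G : SimpleGraph V) (s : ℕ → ℕ) {k : ℕ}
    (φ : V → Fin k) : Prop :=
  ∀ u v : V, u ≠ v → φ u = φ v → (s (φ u) : ℕ∞) < G.edist u v

/-- The `S`-packing chromatic number of `G`: the least `k` admitting an
`S`-packing `k`-coloring. -/
noncomputable def SPackingChromatic {V : Type*} (G : SimpleGraph V) (s : ℕ → ℕ) : ℕ :=
  sInf {k | ∃ φ : V → Fin k, IsSPackingColoring G s φ}

/-- `G` is `χ_S`-critical: every proper subgraph has a strictly smaller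
`S`-packing chromatic number. -/
def SCritical {V : Type*} (G : SimpleGraph V) (s : ℕ → ℕ) : Prop :=
  ∀ H : G.Subgraph, H ≠ ⊤ → SPackingChromatic H.coe s < SPackingChromatic G s

/-- `G` is `χ_S`-vertex-critical: deleting any vertex strictly decreases the
`S`-packing chromatic number. -/
def SVertexCritical {V : Type*} (G : SimpleGraph V) (s : ℕ → ℕ) : Prop :=
  ∀ v : V, SPackingChromatic (G.induce {u | u ≠ v}) s < SPackingChromatic G s

/-!
Color `0` stands for the first color of `S`, whose classes only have to be independent sets.
A proper subgraph `H` of `C_n` misses an edge, so it is contained in the path `P_n`, and by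
criticality `χ_S(P_{2n}) < χ_S(C_{2n})`. An `S'`-coloring of `C_n` lifts to an `S`-coloring of
`C_{2n}` with one more color: the odd vertices get the first color and `2i` gets the color of
`i`, shifted up, because distances between even vertices of `C_{2n}` are twice those in `C_n`.
Conversely, in an `S`-coloring of `P_{2n}` no two consecutive vertices both get the first color,
so there are vertices `t_0 < ⋯ < t_{n-1}` of other colors with `t_{q+1} ≤ t_q + 2`; coloring
`q` by the color of `t_q`, shifted down, is an `S'`-coloring of `P_n`. Altogether
`χ_{S'}(H) ≤ χ_{S'}(P_n) < χ_S(P_{2n}) < χ_S(C_{2n}) ≤ χ_{S'}(C_n) + 1`.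
-/

theorem Fin.val_sub_eq_ite {n : ℕ} (a b : Fin n) :
    (a - b).val = if b.val ≤ a.val then a.val - b.val else n + a.val - b.val := by
  split_ifs with h
  · exact Fin.sub_val_of_le h
  · exact Fin.coe_sub_iff_lt.mpr (not_le.mp h)

theorem Nat.exists_strictMono_of_forall_or_succ {P : ℕ → Prop} (h : ∀ t, P t ∨ P (t + 1)) :
    ∃ T : ℕ → ℕ, StrictMono T ∧ (∀ q, P (T q)) ∧ (∀ q, T q ≤ 2 * q + 1) ∧
      ∀ p q, p ≤ q → T q + 2 * p ≤ T p + 2 * q := by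
  classical
  let pick : ℕ → ℕ := fun t => if P t then t else t + 1
  have hpick : ∀ t, P (pick t) ∧ t ≤ pick t ∧ pick t ≤ t + 1 := fun t => by
    simp only [pick]
    split_ifs with ht
    · exact ⟨ht, le_rfl, by omega⟩
    · exact ⟨(h t).resolve_left ht, by omega, le_rfl⟩
  let T : ℕ → ℕ := fun q => (fun t => pick (t + 1))^[q] (pick 0)
  have hT_succ : ∀ q, T (q + 1) = pick (T q + 1) := fun q => Function.iterate_succ_apply' _ _ _
  have hstep : ∀ q, T q < T (q + 1) ∧ T (q + 1) ≤ T q + 2 := fun q => by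
    have := hpick (T q + 1)
    rw [hT_succ]
    omega
  refine ⟨T, strictMono_nat_of_lt_succ fun q => (hstep q).1, fun q => ?_, fun q => ?_,
    fun p q hpq => ?_⟩
  · cases q with
    | zero => exact (hpick 0).1
    | succ q => rw [hT_succ]; exact (hpick _).1
  · induction q with
    | zero => exact (hpick 0).2.2
    | succ q ih => have := hstep q; omega
  · induction q, hpq using Nat.le_induction with
    | base => omega
    | succ q _ ih => have := hstep q; omega

namespace SimpleGraph

variable {V W : Type*} {G : SimpleGraph V} {G' : SimpleGraph W}

theorem Hom.edist_map_le (f : G →g G') (u v : V) : G'.edist (f u) (f v) ≤ G.edist u v := by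
  by_cases h : G.edist u v = ⊤
  · simp [h]
  · obtain ⟨p, hp⟩ := exists_walk_of_edist_ne_top h
    rw [← hp, ← Walk.length_map f p]
    exact edist_le _

theorem edist_le_of_adj_succ {f : ℕ → V} {b : ℕ} (h : ∀ k < b, G.Adj (f k) (f (k + 1))) :
    G.edist (f 0) (f b) ≤ b := by
  induction b with
  | zero => simp
  | succ b ih =>
    calc G.edist (f 0) (f (b + 1)) ≤ G.edist (f 0) (f b) + G.edist (f b) (f (b + 1)) :=
          SimpleGraph.edist_triangle
      _ ≤ b + 1 := by
          gcongr
          · exact ih fun k hk => h k (by omega)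
          · exact (edist_eq_one_iff_adj.mpr (h b (by omega))).le
      _ = (b + 1 : ℕ) := by push_cast; rfl

theorem le_edist_of_adj_le_succ {f : V → ℕ} (hf : ∀ a b, G.Adj a b → f b ≤ f a + 1)
    (u v : V) : ((f v - f u : ℕ) : ℕ∞) ≤ G.edist u v := by
  by_cases h : G.edist u v = ⊤
  · simp [h]
  · obtain ⟨p, hp⟩ := exists_walk_of_edist_ne_top h
    have hwalk : ∀ {x y : V} (q : G.Walk x y), f y ≤ f x + q.length := by
      intro x y q
      induction q with
      | nil => simp
      | cons hadj q ih => have := hf _ _ hadj; simp only [Walk.length_cons]; omega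
    rw [← hp, Nat.cast_le]
    have := hwalk p
    omega

theorem Subgraph.exists_adj_not_adj_of_ne_top (hG : ∀ v, ∃ w, G.Adj v w) {H : G.Subgraph}
    (hH : H ≠ ⊤) : ∃ a b, G.Adj a b ∧ ¬H.Adj a b := by
  by_contra! hall
  refine hH (Subgraph.ext ?_ ?_)
  · ext v
    obtain ⟨w, hw⟩ := hG v
    simpa using H.edge_vert (hall v w hw)
  · ext a b
    exact ⟨fun h => H.adj_sub h, fun h => hall a b h⟩

theorem pathGraph_edist_of_le {n : ℕ} {u v : Fin n} (huv : u ≤ v) :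
    (pathGraph n).edist u v = (v.val - u.val : ℕ) := by
  refine le_antisymm ?_ ?_
  · let f : ℕ → Fin n := fun k => ⟨min (u.val + k) v.val, by omega⟩
    have hf0 : f 0 = u := Fin.ext (by simp [f, huv])
    have hfv : f (v.val - u.val) = v := Fin.ext (by simp only [f]; omega)
    have := edist_le_of_adj_succ (G := pathGraph n) (f := f) (b := v.val - u.val)
      fun k hk => by rw [pathGraph_adj]; left; simp only [f]; omega
    rwa [hf0, hfv] at this
  · exact le_edist_of_adj_le_succ (f := Fin.val)
      (fun a b h => by rw [pathGraph_adj] at h; omega) u v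

theorem cycleGraph_adj_iff_val {m : ℕ} (hm : 2 ≤ m) {u v : Fin m} :
    (cycleGraph m).Adj u v ↔ u.val + 1 = v.val ∨ v.val + 1 = u.val ∨
      (u.val = 0 ∧ v.val + 1 = m) ∨ (v.val = 0 ∧ u.val + 1 = m) := by
  rw [cycleGraph_adj', Fin.val_sub_eq_ite, Fin.val_sub_eq_ite]
  split_ifs <;> omega

theorem cycleGraph_edist_of_le {m : ℕ} {u v : Fin m} (huv : u ≤ v) :
    (cycleGraph m).edist u v = (min (v.val - u.val) (m - (v.val - u.val)) : ℕ) := by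
  have huv' : u.val ≤ v.val := huv
  rcases Nat.lt_or_ge m 2 with hm | hm
  · obtain rfl : u = v := Fin.ext (by omega)
    simp
  have hpath : ∀ {a b : Fin m}, a ≤ b → (cycleGraph m).edist a b ≤ (b.val - a.val : ℕ) :=
    fun hab => (pathGraph_edist_of_le hab).symm ▸ edist_anti pathGraph_le_cycleGraph
  refine le_antisymm ?_ ?_
  · let first : Fin m := ⟨0, by omega⟩
    let last : Fin m := ⟨m - 1, by omega⟩
    have hwrap : (cycleGraph m).edist first last = 1 :=
      edist_eq_one_iff_adj.mpr ((cycleGraph_adj_iff_val hm).mpr (by simp [first, last]; omega))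
    have hfirst : (cycleGraph m).edist u first ≤ (u.val : ℕ) := by
      rw [edist_comm]; exact hpath (show first.val ≤ u.val from Nat.zero_le _)
    have hlast : (cycleGraph m).edist last v ≤ (m - 1 - v.val : ℕ) := by
      rw [edist_comm]; exact hpath (show v.val ≤ last.val by simp only [last]; omega)
    have haround : (cycleGraph m).edist u v ≤ (m - (v.val - u.val) : ℕ) :=
      calc (cycleGraph m).edist u v
          ≤ (cycleGraph m).edist u last + (cycleGraph m).edist last v :=
            SimpleGraph.edist_triangle
        _ ≤ (cycleGraph m).edist u first + (cycleGraph m).edist first last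
            + (cycleGraph m).edist last v := by gcongr; exact SimpleGraph.edist_triangle
        _ ≤ (u.val : ℕ) + 1 + (m - 1 - v.val : ℕ) := by
            rw [hwrap]; exact add_le_add (add_le_add hfirst le_rfl) hlast
        _ = (m - (v.val - u.val) : ℕ) := by norm_cast; omega
    rw [Nat.mono_cast.map_min]
    exact le_min (hpath huv) haround
  · let dist : Fin m → ℕ := fun w =>
      min ((w.val - u.val) + (u.val - w.val)) (m - ((w.val - u.val) + (u.val - w.val)))
    have := le_edist_of_adj_le_succ (G := cycleGraph m) (f := dist)
      (fun a b h => by rw [cycleGraph_adj_iff_val hm] at h; simp only [dist]; omega) u v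
    have hdist : dist v - dist u = min (v.val - u.val) (m - (v.val - u.val)) := by
      simp only [dist]; omega
    rwa [hdist] at this

theorem Subgraph.isContained_pathGraph_of_ne_top {m : ℕ} (hm : 2 ≤ m)
    {H : (cycleGraph m).Subgraph} (hH : H ≠ ⊤) : H.coe ⊑ pathGraph m := by
  have : NeZero m := ⟨by omega⟩
  have hnbr : ∀ v : Fin m, ∃ w, (cycleGraph m).Adj v w := fun v =>
    if hv : v.val = 0 then ⟨⟨1, by omega⟩, (cycleGraph_adj_iff_val hm).mpr (by dsimp only; omega)⟩
    else ⟨⟨v.val - 1, by omega⟩, (cycleGraph_adj_iff_val hm).mpr (by dsimp only; omega)⟩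
  obtain ⟨a, b, hab, hnab⟩ := H.exists_adj_not_adj_of_ne_top hnbr hH
  obtain ⟨c, d, hcd, hndc⟩ : ∃ c d : Fin m,
      (d.val + 1 = c.val ∨ (c.val = 0 ∧ d.val + 1 = m)) ∧ ¬H.Adj d c := by
    rcases (cycleGraph_adj_iff_val hm).mp hab with h | h | h | h
    · exact ⟨b, a, Or.inl h, hnab⟩
    · exact ⟨a, b, Or.inl h, fun h' => hnab h'.symm⟩
    · exact ⟨a, b, Or.inr h, fun h' => hnab h'.symm⟩
    · exact ⟨b, a, Or.inr h, hnab⟩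
  -- rotating by `c` sends the missing edge `{d, c}` to `{m - 1, 0}`
  refine ⟨⟨⟨fun x => x.val - c, fun {x y} hxy => ?_⟩,
    fun x y hxy => Subtype.ext (sub_left_inj.mp (by exact hxy))⟩⟩
  have hG := (cycleGraph_adj_iff_val hm).mp (H.adj_sub hxy)
  have hdc : ¬(x.val = d ∧ y.val = c) := by rintro ⟨hx, hy⟩; exact hndc (hx ▸ hy ▸ hxy)
  have hcd' : ¬(x.val = c ∧ y.val = d) := by rintro ⟨hx, hy⟩; exact hndc (hx ▸ hy ▸ hxy.symm)
  simp only [Fin.ext_iff] at hdc hcd'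
  rw [pathGraph_adj, Fin.val_sub_eq_ite, Fin.val_sub_eq_ite]
  split_ifs <;> omega

end SimpleGraph

section Coloring

variable {V W : Type*} {G : SimpleGraph V} {G' : SimpleGraph W} {s : ℕ → ℕ} {k : ℕ}

theorem IsSPackingColoring.comp {ψ : W → Fin k} (hψ : IsSPackingColoring G' s ψ)
    (f : Copy G G') : IsSPackingColoring G s (ψ ∘ f) :=
  fun u v huv h => (hψ _ _ (f.injective.ne huv) h).trans_le (f.toHom.edist_map_le u v)

theorem IsSPackingColoring.of_lt [LinearOrder V] {φ : V → Fin k}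
    (h : ∀ u v, u < v → φ u = φ v → (s (φ u) : ℕ∞) < G.edist u v) :
    IsSPackingColoring G s φ := by
  intro u v huv hφ
  rcases huv.lt_or_gt with huv | hvu
  · exact h u v huv hφ
  · rw [hφ, edist_comm]
    exact h v u hvu hφ.symm

theorem sPackingChromatic_le {φ : V → Fin k} (h : IsSPackingColoring G s φ) :
    SPackingChromatic G s ≤ k :=
  Nat.sInf_le ⟨φ, h⟩

theorem exists_isSPackingColoring [Finite V] (G : SimpleGraph V) (s : ℕ → ℕ) :
    ∃ φ : V → Fin (SPackingChromatic G s), IsSPackingColoring G s φ := by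
  obtain ⟨r, ⟨e⟩⟩ := Finite.exists_equiv_fin V
  exact Nat.sInf_mem (s := {k | ∃ φ : V → Fin k, IsSPackingColoring G s φ})
    ⟨r, e, fun u v huv h => absurd (e.injective h) huv⟩

theorem sPackingChromatic_le_of_isContained [Finite W] (h : G ⊑ G') :
    SPackingChromatic G s ≤ SPackingChromatic G' s := by
  obtain ⟨f⟩ := h
  obtain ⟨ψ, hψ⟩ := exists_isSPackingColoring G' s
  exact sPackingChromatic_le (hψ.comp f)

end Coloring

section CyclesAndPaths

variable {s : ℕ → ℕ}

theorem SCritical.sPackingChromatic_pathGraph_lt {m : ℕ} (hm : 3 ≤ m)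
    (hcrit : SCritical (cycleGraph m) s) :
    SPackingChromatic (pathGraph m) s < SPackingChromatic (cycleGraph m) s := by
  let Q := toSubgraph (G := cycleGraph m) (pathGraph m) pathGraph_le_cycleGraph
  have hQ : Q ≠ ⊤ := by
    intro hQ
    have hwrap : (⊤ : (cycleGraph m).Subgraph).Adj ⟨0, by omega⟩ ⟨m - 1, by omega⟩ :=
      (cycleGraph_adj_iff_val (by omega)).mpr (by dsimp only; omega)
    rw [← hQ] at hwrap
    have := pathGraph_adj.mp hwrap
    dsimp only at this
    omega
  have hcopy : pathGraph m ⊑ Q.coe :=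
    ⟨⟨⟨fun v => ⟨v, trivial⟩, fun h => h⟩, fun _ _ h => congrArg Subtype.val h⟩⟩
  exact (sPackingChromatic_le_of_isContained hcopy).trans_lt (hcrit Q hQ)

theorem exists_isSPackingColoring_pathGraph_half (h1 : s 0 = 1) {m K : ℕ}
    {φ : Fin (2 * m) → Fin (K + 1)} (hφ : IsSPackingColoring (pathGraph (2 * m)) s φ) :
    ∃ ψ : Fin m → Fin K, IsSPackingColoring (pathGraph m) (fun i => s (i + 1) / 2) ψ := by
  let P : ℕ → Prop := fun t => ∀ ht : t < 2 * m, φ ⟨t, ht⟩ ≠ 0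
  have hP : ∀ t, P t ∨ P (t + 1) := by
    intro t
    by_contra! hzero
    simp only [P, not_forall, not_not] at hzero
    obtain ⟨⟨ht, h0⟩, ⟨ht', h0'⟩⟩ := hzero
    have hadj : (pathGraph (2 * m)).Adj ⟨t, ht⟩ ⟨t + 1, ht'⟩ := by rw [pathGraph_adj]; simp
    have := hφ _ _ hadj.ne (h0.trans h0'.symm)
    rw [h0, edist_eq_one_iff_adj.mpr hadj] at this
    simp [h1] at this
  obtain ⟨T, hT_mono, hT_P, hT_le, hT_gap⟩ := Nat.exists_strictMono_of_forall_or_succ hP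
  have hT_lt : ∀ q : Fin m, T q < 2 * m := fun q => by have := hT_le q; omega
  refine ⟨fun q => (φ ⟨T q, hT_lt q⟩).pred (hT_P q _), IsSPackingColoring.of_lt ?_⟩
  intro p q hpq hψ
  have hφ_eq : φ ⟨T p, hT_lt p⟩ = φ ⟨T q, hT_lt q⟩ := Fin.pred_inj.mp hψ
  have hTpq : T p < T q := hT_mono hpq
  have hlt := hφ _ _ (Fin.ne_of_lt (Fin.mk_lt_mk.mpr hTpq)) hφ_eq
  rw [pathGraph_edist_of_le (Fin.mk_le_mk.mpr hTpq.le)] at hlt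
  rw [pathGraph_edist_of_le hpq.le, Fin.val_pred,
    Nat.sub_add_cancel (Nat.one_le_iff_ne_zero.mpr (Fin.val_ne_of_ne (hT_P p _)))]
  have := hT_gap p q hpq.le
  dsimp only at hlt
  norm_cast at hlt ⊢
  omega

theorem sPackingChromatic_pathGraph_add_one_le (h1 : s 0 = 1) {m : ℕ} (hm : 0 < m) :
    SPackingChromatic (pathGraph m) (fun i => s (i + 1) / 2) + 1 ≤
      SPackingChromatic (pathGraph (2 * m)) s := by
  obtain ⟨φ, hφ⟩ := exists_isSPackingColoring (pathGraph (2 * m)) s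
  generalize SPackingChromatic (pathGraph (2 * m)) s = K at φ hφ ⊢
  cases K with
  | zero => exact (φ ⟨0, by omega⟩).elim0
  | succ K =>
    obtain ⟨ψ, hψ⟩ := exists_isSPackingColoring_pathGraph_half h1 hφ
    exact Nat.add_le_add_right (sPackingChromatic_le hψ) 1

theorem sPackingChromatic_cycleGraph_two_mul_le (h1 : s 0 = 1) (n : ℕ) :
    SPackingChromatic (cycleGraph (2 * n)) s ≤
      SPackingChromatic (cycleGraph n) (fun i => s (i + 1) / 2) + 1 := by
  obtain ⟨ψ, hψ⟩ := exists_isSPackingColoring (cycleGraph n) (fun i => s (i + 1) / 2)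
  let half : Fin (2 * n) → Fin n := fun u => ⟨u.val / 2, by omega⟩
  let φ : Fin (2 * n) → Fin (SPackingChromatic (cycleGraph n) (fun i => s (i + 1) / 2) + 1) :=
    fun u => if u.val % 2 = 0 then (ψ (half u)).succ else 0
  refine sPackingChromatic_le (φ := φ) (IsSPackingColoring.of_lt fun u v huv hφ => ?_)
  have huv' : u.val < v.val := huv
  have hpar : u.val % 2 = v.val % 2 := by
    by_contra hne
    simp only [φ] at hφ
    split_ifs at hφ <;>
      first | omega | exact Fin.succ_ne_zero _ hφ | exact Fin.succ_ne_zero _ hφ.symm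
  have hhalf : half u < half v := Fin.mk_lt_mk.mpr (by omega)
  rw [cycleGraph_edist_of_le huv.le]
  by_cases heven : u.val % 2 = 0
  · have hψ_eq : ψ (half u) = ψ (half v) := by
      simpa only [φ, if_pos heven, if_pos (hpar ▸ heven), Fin.succ_inj] using hφ
    have hlt := hψ _ _ hhalf.ne hψ_eq
    rw [cycleGraph_edist_of_le hhalf.le] at hlt
    dsimp only at hlt
    simp only [φ, if_pos heven, Fin.val_succ]
    have hu2 : (half u).val = u.val / 2 := rfl
    have hv2 : (half v).val = v.val / 2 := rfl
    norm_cast at hlt ⊢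
    omega
  · simp only [φ, if_neg heven, Fin.val_zero, h1]
    norm_cast
    omega

end CyclesAndPaths

theorem stmt6_general (s : ℕ → ℕ)
    (h1 : s 0 = 1) (n : ℕ) (hn : 3 ≤ n)
    (hcrit : SCritical (cycleGraph (2 * n)) s) :
    SCritical (cycleGraph n) (fun i => s (i + 1) / 2) := by
  intro H hH
  have h_sub := sPackingChromatic_le_of_isContained (s := fun i => s (i + 1) / 2)
    (H.isContained_pathGraph_of_ne_top (by omega) hH)
  have h_path := sPackingChromatic_pathGraph_add_one_le h1 (m := n) (by omega)
  have h_crit := hcrit.sPackingChromatic_pathGraph_lt (by omega)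
  have h_double := sPackingChromatic_cycleGraph_two_mul_le h1 n
  omega

theorem stmt6 (s : ℕ → ℕ) (hmono : Monotone s) (hpos : ∀ i, 1 ≤ s i)
    (h1 : s 0 = 1) (n : ℕ) (hn : 3 ≤ n)
    (hcrit : SCritical (cycleGraph (2 * n)) s) :
    SCritical (cycleGraph n) (fun i => s (i + 1) / 2) :=
  stmt6_general s h1 n hn hcrit
end

section
/- Let S=(1,s_2,s_3,...) be a packing sequence and n a positive integer. If s_i ≥ 2^{i−1} holds for every index i with 2 ≤ i ≤ ⌊log_2 n⌋ + 1, then χ_S(P_n) ≥ ⌊log_2 n⌋ + 1. -/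
open SimpleGraph

/-
A window of `2 ^ k` consecutive vertices of a path cannot be coloured with colours `0, …, k - 1`
when equal colours `c` must be more than `2 ^ c` apart. Induct on `k`: either the first half of
the window avoids colour `k - 1`, or that colour occurs at some `p` in it, and then the
`2 ^ (k - 1)` positions after `p` avoid it; either way colours `0, …, k - 2` would colour a
window of length `2 ^ (k - 1)`. Hence, when `s i ≥ 2 ^ i`, an `S`-packing colouring of `P_n`
with `k` colours forces `n < 2 ^ k`, i.e. `k > log₂ n`.
-/

theorem exists_le_color_of_pow_two_separated (φ : ℕ → ℕ) (k a : ℕ)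
    (hsep : ∀ x y, a ≤ x → x < y → y < a + 2 ^ k → φ x = φ y → 2 ^ φ x < y - x) :
    ∃ m, a ≤ m ∧ m < a + 2 ^ k ∧ k ≤ φ m := by
  induction k generalizing a with
  | zero => exact ⟨a, le_rfl, by simp, Nat.zero_le _⟩
  | succ k ih =>
    have hpow : 2 ^ (k + 1) = 2 ^ k + 2 ^ k := by ring
    by_cases hk : ∃ p, a ≤ p ∧ p < a + 2 ^ k ∧ φ p = k
    · obtain ⟨p, hap, hpa, hp⟩ := hk
      obtain ⟨m, hpm, hmp, hkm⟩ :=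
        ih (p + 1) fun x y hx hxy hy ↦ hsep x y (by omega) hxy (by omega)
      refine ⟨m, by omega, by omega, lt_of_le_of_ne hkm fun hmk ↦ ?_⟩
      have := hsep p m hap (by omega) (by omega) (by rw [hp, hmk])
      rw [hp] at this
      omega
    · push Not at hk
      obtain ⟨m, ham, hma, hkm⟩ := ih a fun x y hx hxy hy ↦ hsep x y hx hxy (by omega)
      exact ⟨m, ham, by omega, lt_of_le_of_ne hkm (hk m ham hma).symm⟩

theorem pathGraph_edist_le {n : ℕ} (u v : Fin n) (huv : u ≤ v) :
    (pathGraph n).edist u v ≤ ((v - u : ℕ) : ℕ∞) := by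
  obtain ⟨d, hd⟩ := Nat.exists_eq_add_of_le (Fin.le_iff_val_le_val.mp huv)
  rw [hd, Nat.add_sub_cancel_left]
  induction d generalizing u with
  | zero => simp [Fin.ext (by omega : (u : ℕ) = v)]
  | succ d ih =>
    let w : Fin n := ⟨u + 1, by omega⟩
    have huw : (pathGraph n).edist u w = 1 :=
      edist_eq_one_iff_adj.mpr (pathGraph_adj.mpr (.inl rfl))
    have hwv : (pathGraph n).edist w v ≤ d :=
      ih w (Fin.le_iff_val_le_val.mpr (by change (u : ℕ) + 1 ≤ v; omega))
        (by change (v : ℕ) = u + 1 + d; omega)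
    calc (pathGraph n).edist u v ≤ (pathGraph n).edist u w + (pathGraph n).edist w v :=
          SimpleGraph.edist_triangle
      _ ≤ 1 + d := by rw [huw]; gcongr
      _ = ((d + 1 : ℕ) : ℕ∞) := by push_cast; ring

theorem lt_pow_two_of_isSPackingColoring_pathGraph {s : ℕ → ℕ} {n k : ℕ}
    (hs : ∀ i < k, 2 ^ i ≤ s i) {φ : Fin n → Fin k}
    (hφ : IsSPackingColoring (pathGraph n) s φ) : n < 2 ^ k := by
  by_contra! hn
  let ψ : ℕ → ℕ := fun m ↦ if hm : m < n then φ ⟨m, hm⟩ else 0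
  have hψ (m : ℕ) (hm : m < n) : ψ m = φ ⟨m, hm⟩ := dif_pos hm
  obtain ⟨m, -, hm, hkm⟩ :=
    exists_le_color_of_pow_two_separated ψ k 0 fun x y _ hxy hy hψxy ↦ by
      rw [hψ x (by omega), hψ y (by omega)] at hψxy
      rw [hψ x (by omega)]
      have hdist := (hφ ⟨x, by omega⟩ ⟨y, by omega⟩ (Fin.ne_of_val_ne hxy.ne)
        (Fin.ext hψxy)).trans_le (pathGraph_edist_le _ _ (Fin.le_iff_val_le_val.mpr hxy.le))
      have := hs _ (φ ⟨x, by omega⟩).isLt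
      simp only [Nat.cast_lt] at hdist
      omega
  rw [hψ m (by omega)] at hkm
  exact (φ ⟨m, by omega⟩).isLt.not_ge hkm

theorem exists_isSPackingColoring_sPackingChromatic {V : Type*} [Fintype V]
    (G : SimpleGraph V) (s : ℕ → ℕ) :
    ∃ φ : V → Fin (SPackingChromatic G s), IsSPackingColoring G s φ :=
  Nat.sInf_mem (s := {k | ∃ φ : V → Fin k, IsSPackingColoring G s φ})
    ⟨Fintype.card V, Fintype.equivFin V,
      fun _ _ huv h ↦ absurd ((Fintype.equivFin V).injective h) huv⟩

theorem stmt10_general (s : ℕ → ℕ)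
    (h1 : s 0 = 1) (n : ℕ) (hn : 1 ≤ n)
    (h : ∀ i, 2 ≤ i → i ≤ Nat.log 2 n + 1 → 2 ^ (i - 1) ≤ s (i - 1)) :
    Nat.log 2 n + 1 ≤ SPackingChromatic (pathGraph n) s := by
  obtain ⟨φ, hφ⟩ := exists_isSPackingColoring_sPackingChromatic (pathGraph n) s
  by_contra! hχ
  have hs : ∀ i < SPackingChromatic (pathGraph n) s, 2 ^ i ≤ s i := by
    rintro (_ | i) hi
    · simp [h1]
    · simpa using h (i + 2) (by omega) (by omega)
  have hlt := lt_pow_two_of_isSPackingColoring_pathGraph hs hφ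
  have hle : 2 ^ SPackingChromatic (pathGraph n) s ≤ n :=
    Nat.pow_le_of_le_log (by omega) (by omega)
  omega

theorem stmt10 (s : ℕ → ℕ) (hmono : Monotone s) (hpos : ∀ i, 1 ≤ s i)
    (h1 : s 0 = 1) (n : ℕ) (hn : 1 ≤ n)
    (h : ∀ i, 2 ≤ i → i ≤ Nat.log 2 n + 1 → 2 ^ (i - 1) ≤ s (i - 1)) :
    Nat.log 2 n + 1 ≤ SPackingChromatic (pathGraph n) s :=
  stmt10_general s h1 n hn h
end
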